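/- Let Q be a Dynkin quiver on Δ with height function ξ, and let (i_k)_{1≤k≤r} (r ∈ ℤ_{≥1}) be a Q-adapted sequence in I. Set p_k := ξ_{i_k} − 2·|{s ∈ ℤ : 1 ≤ s < k, i_s = i_k}|. Then: (1) p_a > p_b whenever 1 ≤ a < b ≤ r and d(i_a,i_b) ≤ 1; (2) φ_Q(i_k,p_k) = ŝ_{i_1}⋯ŝ_{i_{k−1}}(α_{i_k}, 0) for every 1 ≤ k ≤ r; (3) s_{i_1}⋯s_{i_k}(ϖ_{i_k}) = τ_Q^{(ξ_{i_k}−p_k)/2+1}(ϖ_{i_k}) for every 1 ≤ k ≤ r. -/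

import Mathlib

noncomputable section

open scoped BigOperators

/-- A finite Cartan datum: a connected Dynkin diagram of finite type with vertex set `I`,
Cartan matrix `c`, symmetrizers `d`, simple roots `α`, fundamental weights `ϖ`, an invariant
symmetric bilinear form `form` (normalized so that `(α,α) = 2` for short roots, i.e. some
`d i = 1`), simple reflections `s` acting on the weight lattice `V`, the set of positive
roots `Φ`, the longest element `w0` (with induced involution `star`), and Coxeter number
`hcox`. -/
structure SSDatum where
  I : Type
  [fintypeI : Fintype I]
  [decEqI : DecidableEq I]
  [nonemptyI : Nonempty I]
  V : Type
  [acgV : AddCommGroup V]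
  [modV : Module ℚ V]
  [decEqV : DecidableEq V]
  c : I → I → ℤ
  d : I → ℤ
  α : I → V
  ϖ : I → V
  form : V → V → ℚ
  s : I → (V ≃ₗ[ℚ] V)
  Φ : Finset V
  w0 : V ≃ₗ[ℚ] V
  star : I → I
  hcox : ℤ
  c_diag : ∀ i, c i i = 2
  c_nonpos : ∀ i j, i ≠ j → c i j ≤ 0
  c_zero_sym : ∀ i j, c i j = 0 → c j i = 0
  connected : ∀ i j, Relation.ReflTransGen (fun a b => a ≠ b ∧ c a b ≠ 0) i j
  d_pos : ∀ i, 0 < d i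
  d_one : ∃ i, d i = 1
  d_symmetrize : ∀ i j, d i * c i j = d j * c j i
  exists_basis : ∃ b : Module.Basis I ℚ V, ∀ i, b i = ϖ i
  form_symm : ∀ x y, form x y = form y x
  form_add : ∀ x y z, form (x + y) z = form x z + form y z
  form_smul : ∀ (a : ℚ) (x y), form (a • x) y = a * form x y
  form_alpha : ∀ i j, form (α i) (α j) = (d i : ℚ) * (c i j : ℚ)
  form_alpha_omega : ∀ i j, form (α i) (ϖ j) = if i = j then (d i : ℚ) else 0
  form_inv : ∀ i x y, form (s i x) (s i y) = form x y
  s_omega : ∀ i j, s i (ϖ j) = ϖ j - (if i = j then (1 : ℚ) else 0) • α i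
  s_alpha : ∀ i j, s i (α j) = α j - ((c i j : ℚ)) • α i
  alpha_mem : ∀ i, α i ∈ Φ
  zero_not_mem : (0 : V) ∉ Φ
  pos_comb : ∀ β ∈ Φ, ∃ f : I → ℕ, β = ∑ i, (f i : ℚ) • α i
  s_perm : ∀ i, ∀ β ∈ Φ, β ≠ α i → s i β ∈ Φ
  w0_mem : w0 ∈ Subgroup.closure (Set.range s)
  w0_alpha : ∀ i, w0 (α i) = - α (star i)
  star_invol : ∀ i, star (star i) = i
  w0_neg : ∀ β ∈ Φ, -(w0 β) ∈ Φ
  hcox_pos : 0 < hcox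
  hcox_card : hcox * (Fintype.card I : ℤ) = 2 * (Φ.card : ℤ)

attribute [instance] SSDatum.fintypeI SSDatum.decEqI SSDatum.nonemptyI
attribute [instance] SSDatum.acgV SSDatum.modV SSDatum.decEqV

namespace SSDatum

variable (D : SSDatum)

/-- The underlying graph of the Dynkin diagram. -/
def graph : SimpleGraph D.I where
  Adj a b := a ≠ b ∧ D.c a b ≠ 0
  symm := by
    refine ⟨?_⟩
    intro a b h
    exact ⟨h.1.symm, fun hz => h.2 (D.c_zero_sym b a hz)⟩
  loopless := by
    refine ⟨?_⟩
    intro a h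
    exact h.1 rfl

/-- The graph distance `d(i,j)` in the Dynkin diagram. -/
def dist (i j : D.I) : ℕ := D.graph.dist i j

/-- The product `s_{i_1} ⋯ s_{i_r}` of simple reflections along a word. -/
def wordProd (l : List D.I) : D.V ≃ₗ[ℚ] D.V := (l.map D.s).prod

/-- The length of an element of the Weyl group. -/
def len (w : D.V ≃ₗ[ℚ] D.V) : ℕ :=
  sInf {n | ∃ l : List D.I, l.length = n ∧ D.wordProd l = w}

/-- A word is a reduced expression of its product. -/
def IsReducedWord (l : List D.I) : Prop := l.length = D.len (D.wordProd l)

/-- The map `ŵ` on `Φ⁺ × ℤ`: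
`ŵ(β,k) = (wβ, k)` if `wβ ∈ Φ⁺` and `ŵ(β,k) = (−wβ, k−1)` otherwise. -/
def hat (w : D.V ≃ₗ[ℚ] D.V) (x : D.V × ℤ) : D.V × ℤ :=
  if w x.1 ∈ D.Φ then (w x.1, x.2) else (-(w x.1), x.2 - 1)

/-- The map `(ŵ)⁻¹` on `Φ⁺ × ℤ`. -/
def hatInv (w : D.V ≃ₗ[ℚ] D.V) (x : D.V × ℤ) : D.V × ℤ :=
  if w⁻¹ x.1 ∈ D.Φ then (w⁻¹ x.1, x.2) else (-(w⁻¹ x.1), x.2 + 1)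

/-- `ξ` is a height function on the Dynkin diagram. -/
def IsHeight (ξ : D.I → ℤ) : Prop :=
  ∀ i j, D.dist i j = 1 → ξ i - ξ j = 1 ∨ ξ j - ξ i = 1

/-- `i` is a source of the Dynkin quiver `(Δ, ξ)`. -/
def IsSource (ξ : D.I → ℤ) (i : D.I) : Prop :=
  ∀ j, D.dist i j = 1 → ξ j < ξ i

/-- The height function of the reflected quiver `s_i Q`. -/
def rHeight (ξ : D.I → ℤ) (i : D.I) : D.I → ℤ :=
  fun j => if j = i then ξ i - 2 else ξ j

/-- A sequence in `I` is adapted to the Dynkin quiver `(Δ, ξ)`. -/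
def Adapted (ξ : D.I → ℤ) : List D.I → Prop
  | [] => True
  | i :: l => D.IsSource ξ i ∧ Adapted (D.rHeight ξ i) l

/-- `τ` is the Coxeter element `τ_Q` attached to the Dynkin quiver with height function `ξ`:
it has a `Q`-adapted reduced expression in which each simple reflection occurs exactly once. -/
def IsCoxeterFor (ξ : D.I → ℤ) (τ : D.V ≃ₗ[ℚ] D.V) : Prop :=
  ∃ l : List D.I, l.Nodup ∧ (∀ i, i ∈ l) ∧ D.Adapted ξ l ∧ D.wordProd l = τ

/-- `γ_i^Q = (1 - τ_Q) ϖ_i`. -/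
def gam (τ : D.V ≃ₗ[ℚ] D.V) (i : D.I) : D.V := D.ϖ i - τ (D.ϖ i)

/-- The map `φ_Q : Δ̂₀ → Φ⁺ × ℤ`, defined inductively from
`φ_Q(i, ξ_i) = (γ_i^Q, 0)` by applying `(τ̂_Q)^{∓1}` when moving `p ↦ p ± 2`. -/
def phi (ξ : D.I → ℤ) (τ : D.V ≃ₗ[ℚ] D.V) (i : D.I) (p : ℤ) : D.V × ℤ :=
  if p ≤ ξ i then (D.hat τ)^[((ξ i - p) / 2).toNat] (D.gam τ i, 0)
  else (D.hatInv τ)^[((p - ξ i) / 2).toNat] (D.gam τ i, 0)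

/-- The function `η_{i,j}^Q : ℤ → ℚ`. -/
def eta (ξ : D.I → ℤ) (τ : D.V ≃ₗ[ℚ] D.V) (i j : D.I) (u : ℤ) : ℚ :=
  if (u + ξ j - ξ i - 1) % 2 = 0 then
    D.form (D.ϖ i) ((τ ^ ((u + ξ j - ξ i - 1) / 2)) (D.gam τ j))
  else 0

end SSDatum

/-- The variable `t` of the field of formal Laurent series `ℚ((t))`. -/
def tq : LaurentSeries ℚ := HahnSeries.single 1 1

namespace SSDatum

variable (D : SSDatum)

/-- The symmetrized `t`-quantized Cartan matrix `B(t) = C(t) · D⁻¹`, where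
`C(t)_{i,i} = t + t⁻¹` and `C(t)_{i,j} = c_{i,j}` for `i ≠ j`. -/
def Bt : Matrix D.I D.I (LaurentSeries ℚ) :=
  Matrix.of fun i j =>
    (if i = j then tq + tq⁻¹ else (D.c i j : LaurentSeries ℚ)) * ((D.d j : LaurentSeries ℚ))⁻¹

/-- `b̃_{i,j}(u)`: the coefficient of `t^u` in the Laurent expansion of `(B(t)⁻¹)_{i,j}`. -/
def btilde (i j : D.I) (u : ℤ) : ℚ := ((D.Bt)⁻¹ i j).coeff u

/-- `Ñ(i,p;j,s) = b̃_{i,j}(p−s−1) − b̃_{i,j}(s−p−1) − b̃_{i,j}(p−s+1) + b̃_{i,j}(s−p+1)`. -/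
def Ncal (i : D.I) (p : ℤ) (j : D.I) (q : ℤ) : ℚ :=
  D.btilde i j (p - q - 1) - D.btilde i j (q - p - 1)
    - D.btilde i j (p - q + 1) + D.btilde i j (q - p + 1)

end SSDatum

/-!
Induct on the adapted word, stripping its first letter `i`, a source of `Q`. Since the letters
preceding `i` in an adapted reduced word of `τ_Q` are not adjacent to `i`, the source can be moved
to the front: `τ_Q = s_i w` with `i ∉ w`, and then `w s_i = s_i τ_Q s_i` is the Coxeter element of
`s_i Q`. Conjugation by `s_i` transports the statement for `s_i Q` and the shorter word back to
`Q`. For (3) this is immediate. For (2), `ŝ_i` intertwines the hat maps of `w s_i` and `s_i w` on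
positive roots, because both factor through `ŝ_i ∘ ŵ ∘ ŝ_i` (`w` sends `α_i` and `w⁻¹` sends `α_i`
to positive roots); moreover `ŝ_i` sends `(γ_j^{s_i Q}, 0)` to `(γ_j^Q, 0)` for `j ≠ i` and to
`τ̂_Q (γ_i^Q, 0)` for `j = i`, which accounts for the extra occurrence of `i`. Part (1) is a
statement about heights: after reflecting at the source `i_a`, every vertex within distance one
of `i_a` lies strictly below the old height of `i_a`, and heights only decrease afterwards.
-/

theorem Set.MapsTo.iterate_semiconj_on {α β : Type*} {f : α → β} {g : α → α} {g' : β → β}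
    {s : Set α} (hg : Set.MapsTo g s s) (h : ∀ x ∈ s, f (g x) = g' (f x)) (n : ℕ) :
    ∀ x ∈ s, f (g^[n] x) = g'^[n] (f x) := by
  induction n with
  | zero => intro x _; rfl
  | succ n ih =>
    intro x hx
    rw [Function.iterate_succ_apply, Function.iterate_succ_apply, ih (g x) (hg hx), h x hx]

namespace SSDatum

variable {D : SSDatum}

section Roots

lemma form_sum_smul_alpha_omega (f : D.I → ℚ) (i : D.I) :
    D.form (∑ k, f k • D.α k) (D.ϖ i) = f i * D.d i := by
  let pair : D.V →ₗ[ℚ] ℚ :=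
    { toFun := fun x => D.form x (D.ϖ i)
      map_add' := fun x y => D.form_add x y _
      map_smul' := fun a x => D.form_smul a x _ }
  change pair (∑ k, f k • D.α k) = _
  simp [pair, map_sum, D.form_alpha_omega]

lemma form_omega_nonneg {β : D.V} (hβ : β ∈ D.Φ) (i : D.I) : 0 ≤ D.form β (D.ϖ i) := by
  obtain ⟨f, rfl⟩ := D.pos_comb β hβ
  rw [form_sum_smul_alpha_omega]
  exact mul_nonneg (Nat.cast_nonneg _) (by exact_mod_cast (D.d_pos i).le)

lemma form_neg_left (x y : D.V) : D.form (-x) y = -D.form x y := by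
  simpa using D.form_smul (-1) x y

lemma neg_not_mem {β : D.V} (hβ : β ∈ D.Φ) : -β ∉ D.Φ := by
  intro hneg
  obtain ⟨f, rfl⟩ := D.pos_comb β hβ
  have hf : ∀ i, (f i : ℚ) = 0 := fun i => by
    have h₁ := form_omega_nonneg hneg i
    have hd : (0 : ℚ) < D.d i := by exact_mod_cast D.d_pos i
    rw [form_neg_left, form_sum_smul_alpha_omega] at h₁
    nlinarith [(Nat.cast_nonneg (f i) : (0 : ℚ) ≤ f i)]
  exact D.zero_not_mem (by simpa [hf] using hβ)

lemma ext_omega {f g : D.V ≃ₗ[ℚ] D.V} (h : ∀ j, f (D.ϖ j) = g (D.ϖ j)) : f = g := by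
  obtain ⟨b, hb⟩ := D.exists_basis
  exact b.ext' fun j => by rw [hb]; exact h j

lemma s_omega_of_ne {i j : D.I} (h : i ≠ j) : D.s i (D.ϖ j) = D.ϖ j := by
  rw [D.s_omega, if_neg h, zero_smul, sub_zero]

lemma s_omega_self (i : D.I) : D.s i (D.ϖ i) = D.ϖ i - D.α i := by
  rw [D.s_omega, if_pos rfl, one_smul]

lemma s_alpha_self (i : D.I) : D.s i (D.α i) = -D.α i := by
  rw [D.s_alpha, D.c_diag]
  module

lemma s_mul_self (i : D.I) : D.s i * D.s i = 1 := by
  refine ext_omega fun j => ?_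
  rw [LinearEquiv.mul_apply]
  by_cases h : i = j
  · subst h
    rw [s_omega_self, map_sub, s_omega_self, s_alpha_self]
    simp
  · rw [s_omega_of_ne h, s_omega_of_ne h]
    rfl

lemma s_inv (i : D.I) : (D.s i)⁻¹ = D.s i :=
  inv_eq_of_mul_eq_one_right (s_mul_self i)

lemma s_s_omega_of_c_eq_zero {i j : D.I} (hc : D.c i j = 0) (k : D.I) :
    D.s i (D.s j (D.ϖ k)) =
      D.ϖ k - (if i = k then (1 : ℚ) else 0) • D.α i - (if j = k then (1 : ℚ) else 0) • D.α j := by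
  rw [D.s_omega j, map_sub, map_smul, D.s_omega, D.s_alpha, hc]
  simp

lemma s_comm {i j : D.I} (hc : D.c i j = 0) : D.s i * D.s j = D.s j * D.s i := by
  refine ext_omega fun k => ?_
  rw [LinearEquiv.mul_apply, LinearEquiv.mul_apply, s_s_omega_of_c_eq_zero hc,
    s_s_omega_of_c_eq_zero (D.c_zero_sym i j hc), sub_right_comm]

lemma s_mem_or_neg_mem (i : D.I) {β : D.V} (hβ : β ∈ D.Φ) :
    D.s i β ∈ D.Φ ∨ -D.s i β ∈ D.Φ := by
  by_cases h : β = D.α i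
  · right
    rw [h, s_alpha_self, neg_neg]
    exact D.alpha_mem i
  · exact Or.inl (D.s_perm i β hβ h)

end Roots

section WordProd

lemma wordProd_cons (i : D.I) (l : List D.I) : D.wordProd (i :: l) = D.s i * D.wordProd l := by
  simp [wordProd]

lemma wordProd_append (u v : List D.I) : D.wordProd (u ++ v) = D.wordProd u * D.wordProd v := by
  simp [wordProd]

lemma wordProd_singleton (i : D.I) : D.wordProd [i] = D.s i := by
  simp [wordProd]

lemma wordProd_reverse (m : List D.I) : D.wordProd m.reverse = (D.wordProd m)⁻¹ := by
  induction m with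
  | nil => simp [wordProd]
  | cons j m ih =>
    rw [List.reverse_cons, wordProd_append, ih, wordProd_singleton, wordProd_cons, mul_inv_rev,
      s_inv]

lemma wordProd_omega_of_not_mem {i : D.I} {m : List D.I} (h : i ∉ m) :
    D.wordProd m (D.ϖ i) = D.ϖ i := by
  induction m with
  | nil => rfl
  | cons j m ih =>
    rw [List.mem_cons, not_or] at h
    rw [wordProd_cons, LinearEquiv.mul_apply, ih h.2, s_omega_of_ne (Ne.symm h.1)]

lemma form_wordProd (m : List D.I) (x y : D.V) :
    D.form (D.wordProd m x) (D.wordProd m y) = D.form x y := by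
  induction m with
  | nil => rfl
  | cons j m ih => exact (D.form_inv j _ _).trans ih

lemma wordProd_mem_or_neg_mem (m : List D.I) {β : D.V} (hβ : β ∈ D.Φ) :
    D.wordProd m β ∈ D.Φ ∨ -D.wordProd m β ∈ D.Φ := by
  induction m with
  | nil => exact Or.inl hβ
  | cons j m ih =>
    rw [wordProd_cons, LinearEquiv.mul_apply]
    rcases ih with h | h
    · exact s_mem_or_neg_mem j h
    · simpa [or_comm] using s_mem_or_neg_mem j h

lemma wordProd_alpha_mem {i : D.I} {m : List D.I} (h : i ∉ m) : D.wordProd m (D.α i) ∈ D.Φ := by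
  -- `wordProd m` fixes `ϖ i`, so the pairing of `wordProd m (α i)` with `ϖ i` is `d i > 0`
  have hpos : 0 < D.form (D.wordProd m (D.α i)) (D.ϖ i) := by
    rw [← wordProd_omega_of_not_mem h, form_wordProd, D.form_alpha_omega, if_pos rfl]
    exact_mod_cast D.d_pos i
  refine (wordProd_mem_or_neg_mem m (D.alpha_mem i)).resolve_right fun hneg => ?_
  have := form_omega_nonneg hneg i
  rw [form_neg_left] at this
  linarith

lemma s_commute_wordProd {i : D.I} {u : List D.I} (h : ∀ j ∈ u, D.c i j = 0) :
    D.s i * D.wordProd u = D.wordProd u * D.s i :=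
  Commute.list_prod_right _ _ fun x hx => by
    obtain ⟨j, hj, rfl⟩ := List.mem_map.1 hx
    exact s_comm (h j hj)

end WordProd

section Hat

lemma hat_of_mem {w : D.V ≃ₗ[ℚ] D.V} {x : D.V × ℤ} (h : w x.1 ∈ D.Φ) :
    D.hat w x = (w x.1, x.2) :=
  if_pos h

lemma hat_of_not_mem {w : D.V ≃ₗ[ℚ] D.V} {x : D.V × ℤ} (h : w x.1 ∉ D.Φ) :
    D.hat w x = (-w x.1, x.2 - 1) :=
  if_neg h

/-- `(u v)^ = û ∘ v̂` unless `v` sends `x.1` to a negative root which `u` sends back to a positive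
one. -/
lemma hat_mul {u v : D.V ≃ₗ[ℚ] D.V} {x : D.V × ℤ}
    (h : v x.1 ∈ D.Φ ∨ u (-v x.1) ∈ D.Φ) : D.hat (u * v) x = D.hat u (D.hat v x) := by
  by_cases hv : v x.1 ∈ D.Φ
  · rw [hat_of_mem hv]
    rfl
  · have hu := h.resolve_left hv
    have huv : (u * v) x.1 ∉ D.Φ := by
      rw [LinearEquiv.mul_apply, ← neg_neg (u (v x.1)), ← map_neg]
      exact neg_not_mem hu
    rw [hat_of_not_mem hv, hat_of_not_mem huv, hat_of_mem hu, map_neg, LinearEquiv.mul_apply]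

lemma hat_mapsTo (m : List D.I) :
    Set.MapsTo (D.hat (D.wordProd m)) {x | x.1 ∈ D.Φ} {x | x.1 ∈ D.Φ} := by
  intro x hx
  by_cases h : D.wordProd m x.1 ∈ D.Φ
  · rw [hat_of_mem h]
    exact h
  · rw [hat_of_not_mem h]
    exact (wordProd_mem_or_neg_mem m hx).resolve_left h

lemma wordProd_mem_or_s_neg_mem {i : D.I} {m : List D.I} (hi : i ∉ m) {β : D.V}
    (hβ : β ∈ D.Φ) : D.wordProd m β ∈ D.Φ ∨ D.s i (-D.wordProd m β) ∈ D.Φ := by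
  refine or_iff_not_imp_left.2 fun hw =>
    D.s_perm i _ ((wordProd_mem_or_neg_mem m hβ).resolve_left hw) fun heq => ?_
  have hinv : D.wordProd m.reverse (D.wordProd m β) = β := by
    rw [wordProd_reverse]
    exact (D.wordProd m).symm_apply_apply β
  rw [← neg_neg (D.wordProd m β), heq, map_neg] at hinv
  exact neg_not_mem (wordProd_alpha_mem (by simpa using hi)) (hinv ▸ hβ)

lemma hat_s_semiconj {i : D.I} {m : List D.I} (hi : i ∉ m) {x : D.V × ℤ} (hx : x.1 ∈ D.Φ) :
    D.hat (D.s i) (D.hat (D.wordProd m * D.s i) x) =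
      D.hat (D.s i * D.wordProd m) (D.hat (D.s i) x) := by
  have hsx : (D.hat (D.s i) x).1 ∈ D.Φ := by
    simpa [wordProd_singleton] using hat_mapsTo [i] hx
  have hfirst : D.s i x.1 ∈ D.Φ ∨ D.wordProd m (-D.s i x.1) ∈ D.Φ := by
    by_cases hβ : x.1 = D.α i
    · right
      rw [hβ, s_alpha_self, neg_neg]
      exact wordProd_alpha_mem hi
    · exact Or.inl (D.s_perm i _ hx hβ)
  rw [hat_mul hfirst, hat_mul (wordProd_mem_or_s_neg_mem hi hsx)]

end Hat

section Adapted

/-- The height function of `s_{i_k} ⋯ s_{i_1} Q` for the word `m = [i_1, …, i_k]`. -/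
def heightAfter (D : SSDatum) (ξ : D.I → ℤ) (m : List D.I) : D.I → ℤ :=
  fun j => ξ j - 2 * (m.count j : ℤ)

lemma heightAfter_nil (ξ : D.I → ℤ) : D.heightAfter ξ [] = ξ := by
  funext x
  simp [heightAfter]

lemma heightAfter_cons (ξ : D.I → ℤ) (j : D.I) (m : List D.I) :
    D.heightAfter (D.rHeight ξ j) m = D.heightAfter ξ (j :: m) := by
  funext x
  simp only [heightAfter, rHeight, List.count_cons, beq_iff_eq]
  split_ifs <;> simp_all; ring

lemma heightAfter_append_singleton (ξ : D.I → ℤ) (m : List D.I) (j : D.I) :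
    D.heightAfter ξ (m ++ [j]) = D.rHeight (D.heightAfter ξ m) j := by
  funext x
  simp only [heightAfter, rHeight, List.count_append, List.count_singleton, beq_iff_eq]
  split_ifs <;> simp_all; ring

lemma heightAfter_perm (ξ : D.I → ℤ) {m m' : List D.I} (h : m.Perm m') :
    D.heightAfter ξ m = D.heightAfter ξ m' := by
  funext x
  simp [heightAfter, h.count_eq]

lemma heightAfter_le (ξ : D.I → ℤ) (m : List D.I) (x : D.I) : D.heightAfter ξ m x ≤ ξ x := by
  simp [heightAfter]

lemma heightAfter_of_not_mem (ξ : D.I → ℤ) {m : List D.I} {x : D.I} (h : x ∉ m) :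
    D.heightAfter ξ m x = ξ x := by
  simp [heightAfter, List.count_eq_zero_of_not_mem h]

lemma heightAfter_antitone (ξ : D.I → ℤ) {m m' : List D.I} (h : m.Sublist m') (x : D.I) :
    D.heightAfter ξ m' x ≤ D.heightAfter ξ m x := by
  have := h.count_le x
  simp only [heightAfter]
  omega

lemma adapted_append {v : List D.I} :
    ∀ {u : List D.I} {ξ : D.I → ℤ},
      D.Adapted ξ (u ++ v) ↔ D.Adapted ξ u ∧ D.Adapted (D.heightAfter ξ u) v
  | [], ξ => by simp [Adapted, heightAfter_nil]
  | j :: u, ξ => by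
    rw [List.cons_append, Adapted, Adapted, adapted_append, heightAfter_cons, and_assoc]

lemma adapted_singleton {ξ : D.I → ℤ} {i : D.I} : D.Adapted ξ [i] ↔ D.IsSource ξ i := by
  simp [Adapted]

lemma adapted_take {ξ : D.I → ℤ} {l : List D.I} (hl : D.Adapted ξ l) (n : ℕ) :
    D.Adapted ξ (l.take n) :=
  (adapted_append.1 (by rwa [List.take_append_drop])).1

lemma adapted_take_append_get {ξ : D.I → ℤ} {l : List D.I} (hl : D.Adapted ξ l)
    (k : Fin l.length) : D.Adapted ξ (l.take k ++ [l.get k]) := by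
  rw [List.get_eq_getElem, List.take_append_getElem]
  exact adapted_take hl _

lemma adapted_of_le :
    ∀ {u : List D.I} {ξ ξ' : D.I → ℤ}, (∀ x, ξ' x ≤ ξ x) → (∀ x ∈ u, ξ' x = ξ x) →
      D.Adapted ξ u → D.Adapted ξ' u
  | [], _, _, _, _, _ => trivial
  | j :: u, ξ, ξ', hle, heq, ⟨hsrc, hu⟩ => by
    have hj := heq j List.mem_cons_self
    refine ⟨fun x hx => (hle x).trans_lt (hj ▸ hsrc x hx), adapted_of_le ?_ ?_ hu⟩
    · intro x
      simp only [rHeight]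
      split_ifs
      · omega
      · exact hle x
    · intro x hx
      simp only [rHeight]
      split_ifs
      · omega
      · exact heq x (List.mem_cons_of_mem _ hx)

lemma eq_of_dist_eq_zero {i j : D.I} (h : D.dist i j = 0) : i = j :=
  ((SimpleGraph.reachable_iff_reflTransGen i j).2 (D.connected i j)).dist_eq_zero_iff.1 h

lemma rHeight_lt_of_isSource {h : D.I → ℤ} {i x : D.I} (hi : D.IsSource h i)
    (hx : D.dist i x ≤ 1) : D.rHeight h i x < h i := by
  simp only [rHeight]
  split_ifs with hxi
  · subst hxi
    omega
  · exact hi x (by have := mt eq_of_dist_eq_zero (Ne.symm hxi); omega)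

lemma heightAfter_take_lt {ξ : D.I → ℤ} {l : List D.I} (hl : D.Adapted ξ l)
    {a b : Fin l.length} (hab : a < b) (hd : D.dist (l.get a) (l.get b) ≤ 1) :
    D.heightAfter ξ (l.take b) (l.get b) < D.heightAfter ξ (l.take a) (l.get a) := by
  have hsrc : D.IsSource (D.heightAfter ξ (l.take a)) (l.get a) :=
    adapted_singleton.1 (adapted_append.1 (adapted_take_append_get hl a)).2
  calc D.heightAfter ξ (l.take b) (l.get b)
      ≤ D.heightAfter ξ (l.take (a + 1)) (l.get b) :=
        heightAfter_antitone ξ (List.take_sublist_take_left hab) _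
    _ = D.rHeight (D.heightAfter ξ (l.take a)) (l.get a) (l.get b) := by
        rw [← List.take_append_getElem a.isLt, heightAfter_append_singleton]
        rfl
    _ < D.heightAfter ξ (l.take a) (l.get a) := rHeight_lt_of_isSource hsrc hd

end Adapted

section Coxeter

lemma c_eq_zero_of_isSource {ξ : D.I → ℤ} {u : List D.I} {i j : D.I} (hu : D.Adapted ξ u)
    (hi : D.IsSource ξ i) (hiu : i ∉ u) (hj : j ∈ u) : D.c i j = 0 := by
  by_contra hc
  have hji : j ≠ i := fun h => hiu (h ▸ hj)
  have hadj : D.dist i j = 1 := SimpleGraph.dist_eq_one_iff_adj.2 ⟨hji.symm, hc⟩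
  obtain ⟨u₁, u₂, rfl⟩ := List.append_of_mem hj
  have hsrc : D.IsSource (D.heightAfter ξ u₁) j := (adapted_append.1 hu).2.1
  have hiu₁ : i ∉ u₁ := fun h => hiu (List.mem_append_left _ h)
  have h₁ := hsrc i (by rwa [dist, SimpleGraph.dist_comm])
  rw [heightAfter_of_not_mem ξ hiu₁] at h₁
  have h₂ := heightAfter_le ξ u₁ j
  have h₃ := hi j hadj
  omega

lemma heightAfter_of_nodup_of_forall_mem (ξ : D.I → ℤ) {l : List D.I} (hnd : l.Nodup)
    (hall : ∀ j, j ∈ l) : D.heightAfter ξ l = fun j => ξ j - 2 := by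
  funext j
  simp [heightAfter, List.count_eq_one_of_mem hnd (hall j)]

lemma adapted_reflect {ξ : D.I → ℤ} {u v : List D.I} {i : D.I} (hl : D.Adapted ξ (u ++ i :: v))
    (hnd : (u ++ i :: v).Nodup) (hall : ∀ j, j ∈ u ++ i :: v) (hi : D.IsSource ξ i) :
    D.Adapted (D.rHeight ξ i) (u ++ v ++ [i]) := by
  have hiu : i ∉ u := fun h => (List.nodup_cons.1 (List.nodup_middle.1 hnd)).1
    (List.mem_append_left _ h)
  have hl' : D.Adapted ξ (u ++ [i] ++ v) := by simpa using hl
  rw [adapted_append, adapted_append, heightAfter_cons, heightAfter_cons,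
    heightAfter_perm ξ (List.perm_append_singleton i u).symm, adapted_singleton,
    heightAfter_perm ξ List.perm_middle.symm, heightAfter_of_nodup_of_forall_mem ξ hnd hall]
  refine ⟨⟨adapted_of_le ?_ ?_ (adapted_append.1 hl).1, (adapted_append.1 hl').2⟩, ?_⟩
  · intro x
    simp only [rHeight]
    split_ifs with hx
    · subst hx
      omega
    · exact le_rfl
  · intro x hx
    simp only [rHeight, if_neg (fun h : x = i => hiu (h ▸ hx))]
  · intro x hx
    show ξ x - 2 < ξ i - 2
    linarith [hi x hx]

lemma isCoxeterFor_reflect {ξ : D.I → ℤ} {τ : D.V ≃ₗ[ℚ] D.V} (hτ : D.IsCoxeterFor ξ τ)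
    {i : D.I} (hi : D.IsSource ξ i) :
    ∃ rest : List D.I, i ∉ rest ∧ τ = D.s i * D.wordProd rest ∧
      D.IsCoxeterFor (D.rHeight ξ i) (D.wordProd rest * D.s i) := by
  obtain ⟨l, hnd, hall, hl, rfl⟩ := hτ
  obtain ⟨u, v, rfl⟩ := List.append_of_mem (hall i)
  have hnd' := List.nodup_middle.1 hnd
  have hirest : i ∉ u ++ v := (List.nodup_cons.1 hnd').1
  have hcomm : D.s i * D.wordProd u = D.wordProd u * D.s i :=
    s_commute_wordProd fun j hj => c_eq_zero_of_isSource (adapted_append.1 hl).1 hi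
      (fun h => hirest (List.mem_append_left _ h)) hj
  refine ⟨u ++ v, hirest, ?_, u ++ v ++ [i], ?_, ?_, adapted_reflect hl hnd hall hi, ?_⟩
  · rw [wordProd_append, wordProd_cons, wordProd_append, ← mul_assoc, ← mul_assoc, hcomm]
  · exact (List.perm_append_singleton i _).nodup_iff.2 hnd'
  · exact fun j => (List.perm_append_singleton i _).mem_iff.2 (List.perm_middle.mem_iff.1 (hall j))
  · rw [wordProd_append, wordProd_singleton]

lemma gam_mem {ξ : D.I → ℤ} {τ : D.V ≃ₗ[ℚ] D.V} (hτ : D.IsCoxeterFor ξ τ) (j : D.I) :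
    D.gam τ j ∈ D.Φ := by
  obtain ⟨l, hnd, hall, -, rfl⟩ := hτ
  obtain ⟨u, v, rfl⟩ := List.append_of_mem (hall j)
  have hj : j ∉ u ++ v := (List.nodup_cons.1 (List.nodup_middle.1 hnd)).1
  rw [List.mem_append, not_or] at hj
  have : D.gam (D.wordProd (u ++ j :: v)) j = D.wordProd u (D.α j) := by
    rw [gam, wordProd_append, wordProd_cons, LinearEquiv.mul_apply, LinearEquiv.mul_apply,
      wordProd_omega_of_not_mem hj.2, s_omega_self, map_sub, wordProd_omega_of_not_mem hj.1,
      sub_sub_cancel]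
  exact this ▸ wordProd_alpha_mem hj.1

lemma gam_s_mul_wordProd_self {i : D.I} {m : List D.I} (hi : i ∉ m) :
    D.gam (D.s i * D.wordProd m) i = D.α i := by
  rw [gam, LinearEquiv.mul_apply, wordProd_omega_of_not_mem hi, s_omega_self, sub_sub_cancel]

lemma gam_wordProd_mul_s_self {i : D.I} {m : List D.I} (hi : i ∉ m) :
    D.gam (D.wordProd m * D.s i) i = D.wordProd m (D.α i) := by
  rw [gam, LinearEquiv.mul_apply, s_omega_self, map_sub, wordProd_omega_of_not_mem hi,
    sub_sub_cancel]

lemma s_gam_mul_s_of_ne (w : D.V ≃ₗ[ℚ] D.V) {i j : D.I} (hij : i ≠ j) :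
    D.s i (D.gam (w * D.s i) j) = D.gam (D.s i * w) j := by
  rw [gam, gam, LinearEquiv.mul_apply, s_omega_of_ne hij, map_sub, s_omega_of_ne hij,
    LinearEquiv.mul_apply]

lemma hat_s_gam_self {i : D.I} {m : List D.I} (hi : i ∉ m) :
    D.hat (D.s i) (D.gam (D.wordProd m * D.s i) i, 0) =
      D.hat (D.s i * D.wordProd m) (D.gam (D.s i * D.wordProd m) i, 0) := by
  have hw := wordProd_alpha_mem hi
  rw [gam_wordProd_mul_s_self hi, gam_s_mul_wordProd_self hi, hat_mul (Or.inl hw),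
    hat_of_mem (w := D.wordProd m) hw]

end Coxeter

section Main

lemma iterate_hat_gam_eq_foldr :
    ∀ (u : List D.I) {ξ : D.I → ℤ} {τ : D.V ≃ₗ[ℚ] D.V} {j : D.I},
      D.Adapted ξ (u ++ [j]) → D.IsCoxeterFor ξ τ →
      (D.hat τ)^[u.count j] (D.gam τ j, 0) = u.foldr (fun i x => D.hat (D.s i) x) (D.α j, 0)
  | [], ξ, τ, j, hl, hτ => by
    obtain ⟨rest, hj, rfl, -⟩ := isCoxeterFor_reflect hτ (adapted_singleton.1 hl)
    simp [gam_s_mul_wordProd_self hj]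
  | i :: u, ξ, τ, j, ⟨hi, hl⟩, hτ => by
    obtain ⟨rest, hir, rfl, hτ'⟩ := isCoxeterFor_reflect hτ hi
    have hmaps : Set.MapsTo (D.hat (D.wordProd rest * D.s i)) {x | x.1 ∈ D.Φ} {x | x.1 ∈ D.Φ} := by
      simpa [wordProd_append, wordProd_singleton] using hat_mapsTo (rest ++ [i])
    rw [List.foldr_cons, ← iterate_hat_gam_eq_foldr u hl hτ',
      hmaps.iterate_semiconj_on (fun x hx => hat_s_semiconj hir hx) _ _ (gam_mem hτ' j),
      List.count_cons]
    by_cases hij : i = j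
    · subst hij
      rw [hat_s_gam_self hir]
      simp
    · rw [hat_of_mem (by simpa [s_gam_mul_s_of_ne _ hij] using gam_mem hτ j),
        s_gam_mul_s_of_ne _ hij]
      simp [hij]

lemma wordProd_append_singleton_omega :
    ∀ (u : List D.I) {ξ : D.I → ℤ} {τ : D.V ≃ₗ[ℚ] D.V} {j : D.I},
      D.Adapted ξ (u ++ [j]) → D.IsCoxeterFor ξ τ →
      D.wordProd (u ++ [j]) (D.ϖ j) = (τ ^ (u.count j + 1)) (D.ϖ j)
  | [], ξ, τ, j, hl, hτ => by
    obtain ⟨rest, hj, rfl, -⟩ := isCoxeterFor_reflect hτ (adapted_singleton.1 hl)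
    simp [wordProd_singleton, wordProd_omega_of_not_mem hj]
  | i :: u, ξ, τ, j, ⟨hi, hl⟩, hτ => by
    obtain ⟨rest, hir, rfl, hτ'⟩ := isCoxeterFor_reflect hτ hi
    have hconj : SemiconjBy (D.s i) (D.wordProd rest * D.s i) (D.s i * D.wordProd rest) :=
      (mul_assoc _ _ _).symm
    rw [List.cons_append, wordProd_cons, LinearEquiv.mul_apply,
      wordProd_append_singleton_omega u hl hτ', ← LinearEquiv.mul_apply,
      ((hconj.pow_right _).eq), LinearEquiv.mul_apply, List.count_cons]
    by_cases hij : i = j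
    · subst hij
      have hτω : D.s i (D.ϖ i) = (D.s i * D.wordProd rest) (D.ϖ i) := by
        rw [LinearEquiv.mul_apply, wordProd_omega_of_not_mem hir]
      rw [hτω, ← LinearEquiv.mul_apply, ← pow_succ]
      simp
    · simp [hij, s_omega_of_ne hij]

lemma phi_sub_two_mul (ξ : D.I → ℤ) (τ : D.V ≃ₗ[ℚ] D.V) (j : D.I) (n : ℕ) :
    D.phi ξ τ j (ξ j - 2 * n) = (D.hat τ)^[n] (D.gam τ j, 0) := by
  rw [phi, if_pos (by omega)]
  congr
  omega


end Main

end SSDatum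

theorem stmt6_general (D : SSDatum) (ξ : D.I → ℤ)
    (τ : D.V ≃ₗ[ℚ] D.V) (hτ : D.IsCoxeterFor ξ τ)
    (l : List D.I) (hl : D.Adapted ξ l)
    (p : Fin l.length → ℤ)
    (hp : ∀ k : Fin l.length, p k = ξ (l.get k) - 2 * ((l.take k.val).count (l.get k) : ℤ)) :
    (∀ a b : Fin l.length, a < b → D.dist (l.get a) (l.get b) ≤ 1 → p b < p a) ∧
    (∀ k : Fin l.length,
      D.phi ξ τ (l.get k) (p k) =
        (l.take k.val).foldr (fun i x => D.hat (D.s i) x) (D.α (l.get k), 0)) ∧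
    (∀ k : Fin l.length,
      D.wordProd (l.take (k.val + 1)) (D.ϖ (l.get k)) =
        (τ ^ ((ξ (l.get k) - p k) / 2 + 1)) (D.ϖ (l.get k))) := by
  refine ⟨fun a b hab hd => ?_, fun k => ?_, fun k => ?_⟩
  · rw [hp a, hp b]
    exact SSDatum.heightAfter_take_lt hl hab hd
  · rw [hp k, SSDatum.phi_sub_two_mul]
    exact SSDatum.iterate_hat_gam_eq_foldr _ (SSDatum.adapted_take_append_get hl k) hτ
  · have hexp : (ξ (l.get k) - p k) / 2 + 1 = (((l.take k).count (l.get k) + 1 : ℕ) : ℤ) := by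
      rw [hp k]
      omega
    rw [hexp, zpow_natCast, ← List.take_append_getElem k.isLt]
    exact SSDatum.wordProd_append_singleton_omega _ (SSDatum.adapted_take_append_get hl k) hτ

/-- Let `Q` be a Dynkin quiver on `Δ` with height function `ξ`, and let
`(i_k)_{1≤k≤r}` be a `Q`-adapted sequence in `I`. Set
`p_k := ξ_{i_k} − 2·|{s : 1 ≤ s < k, i_s = i_k}|`. Then:
(1) `p_a > p_b` whenever `a < b` and `d(i_a,i_b) ≤ 1`;
(2) `φ_Q(i_k,p_k) = ŝ_{i_1}⋯ŝ_{i_{k−1}}(α_{i_k}, 0)`;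
(3) `s_{i_1}⋯s_{i_k}(ϖ_{i_k}) = τ_Q^{(ξ_{i_k}−p_k)/2+1}(ϖ_{i_k})`. -/
theorem stmt6 (D : SSDatum) (ξ : D.I → ℤ) (hξ : D.IsHeight ξ)
    (τ : D.V ≃ₗ[ℚ] D.V) (hτ : D.IsCoxeterFor ξ τ)
    (l : List D.I) (hne : l ≠ []) (hl : D.Adapted ξ l)
    (p : Fin l.length → ℤ)
    (hp : ∀ k : Fin l.length, p k = ξ (l.get k) - 2 * ((l.take k.val).count (l.get k) : ℤ)) :
    (∀ a b : Fin l.length, a < b → D.dist (l.get a) (l.get b) ≤ 1 → p b < p a) ∧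
    (∀ k : Fin l.length,
      D.phi ξ τ (l.get k) (p k) =
        (l.take k.val).foldr (fun i x => D.hat (D.s i) x) (D.α (l.get k), 0)) ∧
    (∀ k : Fin l.length,
      D.wordProd (l.take (k.val + 1)) (D.ϖ (l.get k)) =
        (τ ^ ((ξ (l.get k) - p k) / 2 + 1)) (D.ϖ (l.get k))) :=
  stmt6_general D ξ τ hτ l hl p hp
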